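/- Every quasi-factor of a minimal distal topological dynamical system (X, G), with X compact metric, is distal: if Z ⊆ 2^X is a minimal subsystem of the induced action of G on the hyperspace 2^X, then the system (Z, G) is distal. -/

import Mathlib

/-!
Let `E` be the Ellis enveloping semigroup of the hyperspace `2^X`. If `A, B ∈ Z` are proximal,
some `p ∈ E` has `p A = p B`, and by minimality of `Z` some `q ∈ E` brings `p A` back to `A`, so
`r = q ∘ p` satisfies `r A = r B = A`. The elements of `E` with this property form a closed
subsemigroup, which contains an idempotent `v`. An idempotent of `E` fixes every singleton `{x}`:
`{x}` and `v {x}` are proximal, and the singletons form a copy of the distal system `X`. Since `v`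
preserves inclusion, `b ∈ B` gives `{b} = v {b} ⊆ v B = A`. Hence `B ⊆ A`, and `A ⊆ B` likewise.
-/

open Set Topology TopologicalSpace

section Envelope

variable (G : Type*) {Y : Type*} [Monoid G] [TopologicalSpace Y] [MulAction G Y]

def Proximal (y₁ y₂ : Y) : Prop :=
  ∃ y, (y, y) ∈ closure (range fun g : G => (g • y₁, g • y₂))

variable (Y) in
def envelope : Set (Y → Y) :=
  closure (range fun g : G => (g • · : Y → Y))

variable {G}

theorem isCompact_envelope [CompactSpace Y] : IsCompact (envelope G Y) :=
  isClosed_closure.isCompact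

theorem exists_mem_envelope_eq_of_mem_closure [CompactSpace Y] {T : Type*} [TopologicalSpace T]
    [T2Space T] {F : (Y → Y) → T} (hF : Continuous F) {z : T}
    (hz : z ∈ closure (range fun g : G => F (g • ·))) : ∃ p ∈ envelope G Y, F p = z := by
  rwa [range_comp' F, ← image_closure_of_isCompact isCompact_envelope hF.continuousOn] at hz

theorem apply_mem_of_mem_envelope {s : Set Y} (hs : IsClosed s)
    (hinv : ∀ g : G, ∀ y ∈ s, g • y ∈ s) {p : Y → Y} (hp : p ∈ envelope G Y) {y : Y}
    (hy : y ∈ s) : p y ∈ s :=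
  hs.closure_subset <| map_mem_closure (f := fun p : Y → Y => p y) (continuous_apply y) hp
    (by rintro _ ⟨g, rfl⟩; exact hinv g y hy)

theorem apply_mem_of_mem_envelope₂ {R : Set (Y × Y)} (hR : IsClosed R)
    (hinv : ∀ (g : G) y₁ y₂, (y₁, y₂) ∈ R → (g • y₁, g • y₂) ∈ R) {p : Y → Y}
    (hp : p ∈ envelope G Y) {y₁ y₂ : Y} (hy : (y₁, y₂) ∈ R) : (p y₁, p y₂) ∈ R :=
  hR.closure_subset <| map_mem_closure (f := fun p : Y → Y => (p y₁, p y₂))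
    ((continuous_apply y₁).prodMk (continuous_apply y₂)) hp
    (by rintro _ ⟨g, rfl⟩; exact hinv g y₁ y₂ hy)

theorem proximal_iff_exists_mem_envelope [CompactSpace Y] [T2Space Y] {y₁ y₂ : Y} :
    Proximal G y₁ y₂ ↔ ∃ p ∈ envelope G Y, p y₁ = p y₂ := by
  have hF : Continuous fun p : Y → Y => (p y₁, p y₂) :=
    (continuous_apply y₁).prodMk (continuous_apply y₂)
  constructor
  · rintro ⟨y, hy⟩
    obtain ⟨p, hp, hpy⟩ := exists_mem_envelope_eq_of_mem_closure hF hy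
    exact ⟨p, hp, (congrArg Prod.fst hpy).trans (congrArg Prod.snd hpy).symm⟩
  · rintro ⟨p, hp, hpy⟩
    have := map_mem_closure (f := fun p : Y → Y => (p y₁, p y₂))
      (t := range fun g : G => (g • y₁, g • y₂)) hF hp (by rintro _ ⟨g, rfl⟩; exact ⟨g, rfl⟩)
    exact ⟨p y₂, by rwa [hpy] at this⟩

theorem proximal_apply_of_idempotent [CompactSpace Y] [T2Space Y] {u : Y → Y}
    (hu : u ∈ envelope G Y) (huu : u ∘ u = u) (y : Y) : Proximal G y (u y) :=
  proximal_iff_exists_mem_envelope.2 ⟨u, hu, (congrFun huu y).symm⟩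

theorem Proximal.of_isClosedEmbedding {Y' : Type*} [TopologicalSpace Y'] [MulAction G Y']
    {f : Y → Y'} (hf : IsClosedEmbedding f) (hfG : ∀ (g : G) y, f (g • y) = g • f y)
    {y₁ y₂ : Y} (h : Proximal G (f y₁) (f y₂)) : Proximal G y₁ y₂ := by
  obtain ⟨z, hz⟩ := h
  have hrange : (range fun g : G => (g • f y₁, g • f y₂)) =
      Prod.map f f '' range fun g : G => (g • y₁, g • y₂) := by
    rw [← range_comp]; simp only [Function.comp_def, Prod.map, hfG]
  rw [hrange, (hf.prodMap hf).closure_image_eq] at hz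
  obtain ⟨⟨a, b⟩, hab, hz⟩ := hz
  simp only [Prod.map, Prod.mk.injEq] at hz
  obtain rfl : a = b := hf.injective (hz.1.trans hz.2.symm)
  exact ⟨a, hab⟩

variable [ContinuousConstSMul G Y]

theorem comp_mem_envelope {p q : Y → Y} (hp : p ∈ envelope G Y) (hq : q ∈ envelope G Y) :
    p ∘ q ∈ envelope G Y := by
  have hleft (g : G) : (g • ·) ∘ q ∈ envelope G Y :=
    map_mem_closure (continuous_pi fun y => (continuous_const_smul g).comp (continuous_apply y))
      hq (by rintro _ ⟨h, rfl⟩; exact ⟨g * h, funext fun y => mul_smul g h y⟩)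
  simpa only [envelope, closure_closure] using map_mem_closure (t := envelope G Y)
    (f := (· ∘ q)) (continuous_pi fun y => continuous_apply (q y)) hp
    (by rintro _ ⟨g, rfl⟩; exact hleft g)

end Envelope

/-- Ellis' idempotent lemma, for composition on `Y → Y` seen as the monoid `Function.End Y`. -/
theorem exists_idempotent_comp {Y : Type*} [TopologicalSpace Y] [T2Space Y] {J : Set (Y → Y)}
    (hJ : IsCompact J) (hne : J.Nonempty) (hcomp : ∀ p ∈ J, ∀ q ∈ J, p ∘ q ∈ J) :
    ∃ v ∈ J, v ∘ v = v :=
  letI : TopologicalSpace (Function.End Y) := Pi.topologicalSpace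
  haveI : T2Space (Function.End Y) := inferInstanceAs (T2Space (Y → Y))
  exists_idempotent_in_compact_subsemigroup (M := Function.End Y)
    (fun r => continuous_pi fun y => continuous_apply (r y)) J hne hJ hcomp

namespace TopologicalSpace.NonemptyCompacts

variable {G X : Type*} [Monoid G] [TopologicalSpace X] [MulAction G X] [ContinuousConstSMul G X]

instance : SMul G (NonemptyCompacts X) :=
  ⟨fun g K => K.map (g • ·) (continuous_const_smul g)⟩

@[simp]
theorem coe_smul (g : G) (K : NonemptyCompacts X) :
    ((g • K : NonemptyCompacts X) : Set X) = (g • ·) '' K :=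
  rfl

instance : MulAction G (NonemptyCompacts X) where
  one_smul K := NonemptyCompacts.ext (by simp)
  mul_smul g h K := NonemptyCompacts.ext (by simp [image_image, mul_smul])

instance : ContinuousConstSMul G (NonemptyCompacts X) :=
  ⟨fun g => (continuous_const_smul g).nonemptyCompacts_map⟩

theorem smul_singleton (g : G) (x : X) : g • ({x} : NonemptyCompacts X) = {g • x} :=
  NonemptyCompacts.ext (by simp)

theorem smul_mono (g : G) {K L : NonemptyCompacts X} (h : K ≤ L) : g • K ≤ g • L :=
  image_mono (f := (g • ·)) h

theorem singleton_le {x : X} {K : NonemptyCompacts X} : {x} ≤ K ↔ x ∈ K :=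
  singleton_subset_iff

theorem isClosed_setOf_le [T2Space X] :
    IsClosed {P : NonemptyCompacts X × NonemptyCompacts X | P.1 ≤ P.2} := by
  simpa only [sup_eq_right] using
    isClosed_eq (continuous_sup (L := NonemptyCompacts X)) continuous_snd

end TopologicalSpace.NonemptyCompacts

open NonemptyCompacts

section Distal

variable {G X : Type*} [Monoid G] [TopologicalSpace X] [CompactSpace X] [T2Space X]
  [MulAction G X] [ContinuousConstSMul G X]

theorem apply_singleton_eq_of_idempotent (hdistal : ∀ x₁ x₂ : X, Proximal G x₁ x₂ → x₁ = x₂)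
    {v : NonemptyCompacts X → NonemptyCompacts X} (hv : v ∈ envelope G (NonemptyCompacts X))
    (hvv : v ∘ v = v) (x : X) : v {x} = {x} := by
  obtain ⟨x', hx'⟩ : v {x} ∈ range ({·} : X → NonemptyCompacts X) :=
    apply_mem_of_mem_envelope isClosedEmbedding_singleton.isClosed_range
      (by rintro g _ ⟨y, rfl⟩; exact ⟨g • y, (smul_singleton g y).symm⟩) hv ⟨x, rfl⟩
  have hprox := proximal_apply_of_idempotent hv hvv {x}
  rw [← hx'] at hprox ⊢
  rw [hdistal x x' (hprox.of_isClosedEmbedding isClosedEmbedding_singleton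
    fun g y => (smul_singleton g y).symm)]

theorem le_of_mem_envelope_of_apply_eq (hdistal : ∀ x₁ x₂ : X, Proximal G x₁ x₂ → x₁ = x₂)
    {p : NonemptyCompacts X → NonemptyCompacts X} (hp : p ∈ envelope G (NonemptyCompacts X))
    {S T : NonemptyCompacts X} (hT : p T = T) (hS : p S = T) : S ≤ T := by
  let J := envelope G (NonemptyCompacts X) ∩ ({q | q T = T} ∩ {q | q S = T})
  have hJ : IsCompact J := isCompact_envelope.inter_right <|
    (isClosed_eq (continuous_apply T) continuous_const).inter
      (isClosed_eq (continuous_apply S) continuous_const)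
  obtain ⟨v, ⟨hvE, -, hvS⟩, hvv⟩ := exists_idempotent_comp hJ ⟨p, hp, hT, hS⟩ <| by
    rintro q ⟨hq, hqT : q T = T, -⟩ r ⟨hr, hrT : r T = T, hrS : r S = T⟩
    exact ⟨comp_mem_envelope hq hr, show q (r T) = T by rw [hrT, hqT],
      show q (r S) = T by rw [hrS, hqT]⟩
  intro b hb
  have hbv := apply_mem_of_mem_envelope₂ (y₁ := {b}) (y₂ := S) isClosed_setOf_le
    (fun g _ _ => smul_mono g) hvE (singleton_le.2 hb)
  rw [apply_singleton_eq_of_idempotent hdistal hvE hvv, hvS] at hbv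
  exact singleton_le.1 hbv

end Distal

theorem quasifactor_of_distal_is_distal_general
    {G X : Type*} [Group G]
    [MetricSpace X] [CompactSpace X]
    [MulAction G X] [ContinuousConstSMul G X]
    (hdistal : ∀ x₁ x₂ : X,
      (∃ x : X, (x, x) ∈ closure (Set.range fun g : G => (g • x₁, g • x₂))) → x₁ = x₂)
    (σ : G → NonemptyCompacts X → NonemptyCompacts X)
    (hσ : ∀ (g : G) (A : NonemptyCompacts X), ((σ g A : Set X)) = (fun x : X => g • x) '' A)
    (Z : Set (NonemptyCompacts X)) (hZcl : IsClosed Z)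
    (hZinv : ∀ (g : G), ∀ A ∈ Z, σ g A ∈ Z)
    (hZmin : ∀ A ∈ Z, Z ⊆ closure (Set.range fun g : G => σ g A)) :
    ∀ A ∈ Z, ∀ B ∈ Z,
      (∃ C : NonemptyCompacts X,
        (C, C) ∈ closure (Set.range fun g : G => (σ g A, σ g B))) →
      A = B := by
  obtain rfl : σ = (· • ·) := funext₂ fun g A => NonemptyCompacts.ext (hσ g A)
  intro A hA B hB hprox
  obtain ⟨p, hp, hpAB⟩ := proximal_iff_exists_mem_envelope.1 hprox
  have hpA : p A ∈ Z := apply_mem_of_mem_envelope hZcl hZinv hp hA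
  have hreturn {D : NonemptyCompacts X} (hD : D ∈ Z) :
      ∃ q ∈ envelope G (NonemptyCompacts X), q (p A) = D :=
    exists_mem_envelope_eq_of_mem_closure (F := fun q => q (p A)) (continuous_apply _)
      (hZmin _ hpA hD)
  obtain ⟨qA, hqA, hqpA⟩ := hreturn hA
  obtain ⟨qB, hqB, hqpB⟩ := hreturn hB
  refine le_antisymm ?_ ?_
  · exact le_of_mem_envelope_of_apply_eq hdistal (comp_mem_envelope hqB hp)
      (by simp [← hpAB, hqpB]) (by simp [hqpB])
  · exact le_of_mem_envelope_of_apply_eq hdistal (comp_mem_envelope hqA hp)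
      (by simp [hqpA]) (by simp [← hpAB, hqpA])

/-- Every quasi-factor of a minimal distal topological dynamical system
`(X, G)`, with `X` compact metric, is distal.  The hyperspace `2^X` of nonempty closed
(= compact) subsets of `X` with the Hausdorff metric carries the induced action
`g • A = {g • x : x ∈ A}`, encoded here by a map `σ` with `(σ g A : Set X) = (g • ·) '' A`;
a quasi-factor is a minimal subsystem `Z ⊆ 2^X`.  Conclusion: any two points of `Z` that
are proximal (the closure of their diagonal `G`-orbit in `2^X × 2^X` meets the diagonal)
are equal. -/
theorem quasifactor_of_distal_is_distal
    {G X : Type*} [Group G]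
    [MetricSpace X] [CompactSpace X]
    [MulAction G X] [ContinuousConstSMul G X]
    (hmin : MulAction.IsMinimal G X)
    (hdistal : ∀ x₁ x₂ : X,
      (∃ x : X, (x, x) ∈ closure (Set.range fun g : G => (g • x₁, g • x₂))) → x₁ = x₂)
    (σ : G → NonemptyCompacts X → NonemptyCompacts X)
    (hσ : ∀ (g : G) (A : NonemptyCompacts X), ((σ g A : Set X)) = (fun x : X => g • x) '' A)
    (Z : Set (NonemptyCompacts X)) (hZne : Z.Nonempty) (hZcl : IsClosed Z)
    (hZinv : ∀ (g : G), ∀ A ∈ Z, σ g A ∈ Z)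
    (hZmin : ∀ A ∈ Z, Z ⊆ closure (Set.range fun g : G => σ g A)) :
    ∀ A ∈ Z, ∀ B ∈ Z,
      (∃ C : NonemptyCompacts X,
        (C, C) ∈ closure (Set.range fun g : G => (σ g A, σ g B))) →
      A = B :=
  quasifactor_of_distal_is_distal_general hdistal σ hσ Z hZcl hZinv hZmin
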